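/- With S(c) = a + c·d nonzero, d ≠ 0, e ≠ 0, the derivative of r(c) = cos(S(c), e) is strictly positive at c if and only if cos(d, e) > cos(S(c), e)·cos(S(c), d), where cos(u,v) = ⟨u,v⟩/(‖u‖·‖v‖). -/

import Mathlib

open RealInnerProductSpace

theorem stmt11 {n : ℕ} (a d e : EuclideanSpace ℝ (Fin n))
    (hd : d ≠ 0) (he : e ≠ 0) (c : ℝ) (hS : a + c • d ≠ 0) :
    0 < deriv (fun t : ℝ => ⟪a + t • d, e⟫ / (‖a + t • d‖ * ‖e‖)) c ↔
      ⟪d, e⟫ / (‖d‖ * ‖e‖) >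
        (⟪a + c • d, e⟫ / (‖a + c • d‖ * ‖e‖)) *
          (⟪a + c • d, d⟫ / (‖a + c • d‖ * ‖d‖)) := by
  have hSnorm : (0:ℝ) < ‖a + c • d‖ := norm_pos_iff.mpr hS
  have hdnorm : (0:ℝ) < ‖d‖ := norm_pos_iff.mpr hd
  have henorm : (0:ℝ) < ‖e‖ := norm_pos_iff.mpr he
  -- derivative of the numerator
  have hg : HasDerivAt (fun t : ℝ => ⟪a + t • d, e⟫) ⟪d, e⟫ c := by
    have heq : (fun t : ℝ => ⟪a + t • d, e⟫) = fun t => ⟪a, e⟫ + t * ⟪d, e⟫ := by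
      funext t; rw [inner_add_left, real_inner_smul_left]
    rw [heq]
    exact ((hasDerivAt_const c (⟪a, e⟫ : ℝ)).add ((hasDerivAt_id c).mul_const ⟪d, e⟫)).congr_deriv
      (by simp)
  -- derivative of the squared norm
  have hq : HasDerivAt (fun t : ℝ => ⟪a + t • d, a + t • d⟫)
      (2 * ⟪a + c • d, d⟫) c := by
    have heq : (fun t : ℝ => ⟪a + t • d, a + t • d⟫)
        = fun t => ⟪a, a⟫ + 2 * t * ⟪a, d⟫ + t ^ 2 * ⟪d, d⟫ := by
      funext t
      rw [real_inner_add_add_self, real_inner_smul_right, real_inner_smul_left,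
        real_inner_smul_right]
      ring
    rw [heq]
    have h1 : HasDerivAt (fun t : ℝ => ⟪a, a⟫ + 2 * t * ⟪a, d⟫ + t ^ 2 * ⟪d, d⟫)
        (2 * ⟪a, d⟫ + 2 * c * ⟪d, d⟫) c := by
      have := (((hasDerivAt_id c).const_mul (2:ℝ)).mul_const (⟪a, d⟫ : ℝ))
      have h2 := ((hasDerivAt_pow 2 c).mul_const (⟪d, d⟫ : ℝ))
      exact (((hasDerivAt_const c (⟪a, a⟫ : ℝ)).add this).add h2).congr_deriv (by norm_num)
    convert h1 using 1
    have : ⟪a + c • d, d⟫ = ⟪a, d⟫ + c * ⟪d, d⟫ := by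
      rw [inner_add_left, real_inner_smul_left]
    rw [this]; ring
  -- derivative of the norm
  have hqval : ⟪a + c • d, a + c • d⟫ = ‖a + c • d‖ * ‖a + c • d‖ :=
    real_inner_self_eq_norm_mul_norm _
  have hqne : ⟪a + c • d, a + c • d⟫ ≠ 0 := by
    rw [hqval]; positivity
  have hnorm : HasDerivAt (fun t : ℝ => ‖a + t • d‖)
      (⟪a + c • d, d⟫ / ‖a + c • d‖) c := by
    have hs := hq.sqrt hqne
    have heq : (fun t : ℝ => ‖a + t • d‖)
        = fun t => Real.sqrt ⟪a + t • d, a + t • d⟫ := by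
      funext t
      rw [real_inner_self_eq_norm_mul_norm, Real.sqrt_mul_self (norm_nonneg _)]
    rw [heq]
    convert hs using 1
    rw [hqval, Real.sqrt_mul_self (norm_nonneg _)]
    field_simp
  -- derivative of the quotient
  have hdenne : ‖a + c • d‖ * ‖e‖ ≠ 0 := by positivity
  have hf : HasDerivAt (fun t : ℝ => ⟪a + t • d, e⟫ / (‖a + t • d‖ * ‖e‖))
      ((⟪d, e⟫ * (‖a + c • d‖ * ‖e‖) -
        ⟪a + c • d, e⟫ * (⟪a + c • d, d⟫ / ‖a + c • d‖ * ‖e‖)) /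
        (‖a + c • d‖ * ‖e‖) ^ 2) c :=
    hg.div (hnorm.mul_const ‖e‖) hdenne
  have hderiv : deriv (fun t : ℝ => ⟪a + t • d, e⟫ / (‖a + t • d‖ * ‖e‖)) c
      = (⟪d, e⟫ * ‖a + c • d‖ ^ 2 - ⟪a + c • d, e⟫ * ⟪a + c • d, d⟫) /
        (‖a + c • d‖ ^ 3 * ‖e‖) := by
    rw [hf.deriv]
    field_simp
  rw [hderiv]
  constructor
  · intro h
    rw [lt_div_iff₀ (by positivity)] at h
    simp only [zero_mul] at h
    rw [gt_iff_lt, div_mul_div_comm, div_lt_div_iff₀ (by positivity) (by positivity)]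
    nlinarith [mul_pos hdnorm henorm, sq_nonneg (‖a + c • d‖)]
  · intro h
    rw [gt_iff_lt, div_mul_div_comm, div_lt_div_iff₀ (by positivity) (by positivity)] at h
    rw [lt_div_iff₀ (by positivity)]
    simp only [zero_mul]
    nlinarith [mul_pos hdnorm henorm]
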